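/- High-frequency elliptic estimate (Lemma 3.2, second part, circle case). Let α ∈ (0,2), let χ : 𝕋 → [0,∞) be bounded measurable, and let G_∞ : ℝ → [0,1] be a smooth function with G_∞(ξ) = 0 for |ξ| < 4. Then for every z ∈ ℝ, every h > 0 and every u ∈ C^∞(𝕋): ‖G_∞(hD)u‖_{L²(𝕋)} ≤ (z²/4^α) ‖u‖_{L²} + ‖P(h,z)u‖_{L²} + (|z| h^{α/2}/4^α) ‖√χ‖_{L^∞} ‖√χ · u‖_{L²}. -/

import Mathlib

open MeasureTheory Real Filter Complex
open scoped Topology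

noncomputable section

instance : Fact (0 < 2 * Real.pi) := ⟨by positivity⟩

/-- The circle `𝕋 = ℝ/2πℤ`. -/
abbrev Circ := AddCircle (2 * Real.pi)

/-- The squared `L²` norm on the circle. -/
def L2sq (u : Circ → ℂ) : ℝ := ∫ x : Circ, ‖u x‖ ^ 2

/-- The `L²` norm on the circle. -/
def L2norm (u : Circ → ℂ) : ℝ := (L2sq u) ^ ((1 : ℝ) / 2)

/-- A Fourier multiplier with symbol `m : ℤ → ℂ`. -/
def Mult (m : ℤ → ℂ) (u : Circ → ℂ) : Circ → ℂ :=
  fun x => ∑' k : ℤ, m k * fourierCoeff u k * fourier k x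

/-- The fractional derivative `|D|^s`, acting on Fourier coefficients by `|k|^s`. -/
def fracD (s : ℝ) (u : Circ → ℂ) : Circ → ℂ :=
  Mult (fun k => ((|(k : ℝ)| ^ s : ℝ) : ℂ)) u

/-- The semiclassical fractional derivative `|hD|^α`, acting by `|h k|^α`. -/
def fracDh (α h : ℝ) (u : Circ → ℂ) : Circ → ℂ :=
  Mult (fun k => ((|h * (k : ℝ)| ^ α : ℝ) : ℂ)) u

/-- A Fourier multiplier `G(hD)` with symbol `ξ ↦ G(ξ)`. -/
def MultG (G : ℝ → ℝ) (h : ℝ) (u : Circ → ℂ) : Circ → ℂ :=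
  Mult (fun k => ((G (h * (k : ℝ)) : ℝ) : ℂ)) u

/-- The semiclassical stationary operator `P(h,z) = |hD|^α − i z h^{α/2} χ − z²`. -/
def Pop (α h z : ℝ) (χ : Circ → ℝ) (u : Circ → ℂ) : Circ → ℂ :=
  fun x => fracDh α h u x - Complex.I * (z : ℂ) * ((h ^ (α / 2) : ℝ) : ℂ) * (χ x : ℂ) * u x
    - ((z ^ 2 : ℝ) : ℂ) * u x

/-- `u ∈ C^∞(𝕋)`: the periodic lift of `u` to `ℝ` is smooth. -/
def SmoothT (u : Circ → ℂ) : Prop := ContDiff ℝ (⊤ : ℕ∞) fun x : ℝ => u (x : Circ)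

/-- `f ∈ C^{0,β}(𝕋)`: `f` is bounded and `β`-Hölder continuous. -/
def MemHolderT (β : ℝ) (f : Circ → ℝ) : Prop :=
  (∃ M : ℝ, ∀ x, |f x| ≤ M) ∧ ∃ C : ℝ, ∀ x y, |f x - f y| ≤ C * dist x y ^ β

/-- Geometric control condition on the circle: `χ` is bounded below by a positive
constant on some nonempty open set. -/
def GCC (χ : Circ → ℝ) : Prop :=
  ∃ O : Set Circ, IsOpen O ∧ O.Nonempty ∧ ∃ c : ℝ, 0 < c ∧ ∀ x ∈ O, c ≤ χ x

/-- The squared Sobolev `H^s` norm, `Σ (1+k²)^s |û(k)|²`. -/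
def HsNormSq (s : ℝ) (u : Circ → ℂ) : ℝ :=
  ∑' k : ℤ, (1 + (k : ℝ) ^ 2) ^ s * ‖fourierCoeff u k‖ ^ 2

/-- Membership in the Sobolev space `H^s(𝕋)`. -/
def MemHs (s : ℝ) (u : Circ → ℂ) : Prop :=
  Summable fun k : ℤ => (1 + (k : ℝ) ^ 2) ^ s * ‖fourierCoeff u k‖ ^ 2

/-- `u'` is the derivative of `u` on `[0,∞)` as a curve in `H^s(𝕋)`:
the difference quotients converge to `u' t` in the `H^s` norm. -/
def DiffCurveOn (s : ℝ) (u u' : ℝ → Circ → ℂ) : Prop :=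
  ∀ t : ℝ, 0 ≤ t →
    Tendsto (fun τ : ℝ =>
        HsNormSq s fun x => ((τ - t : ℝ) : ℂ)⁻¹ • (u τ x - u t x) - u' t x)
      (𝓝[Set.Ici 0 \ {t}] t) (𝓝 0)

/-- The energy of a solution. -/
def energy (α : ℝ) (u u' : ℝ → Circ → ℂ) (t : ℝ) : ℝ :=
  L2sq (fracD (α / 2) (u t)) + L2sq (u' t)


namespace HFE
open AddCircle

local notation "μh" => (haarAddCircle : Measure Circ)

lemma two_pi_pos : (0:ℝ) < 2 * π := by positivity

lemma hb02 : (0:ℝ) < 0 + 2 * π := by positivity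

lemma norm_fourier {T : ℝ} (m : ℤ) (x : AddCircle T) : ‖(fourier m x : ℂ)‖ = 1 := by
  rw [fourier_apply]
  exact Circle.norm_coe _

lemma nnnorm_fourier {T : ℝ} (m : ℤ) (x : AddCircle T) : ‖(fourier m x : ℂ)‖₊ = 1 := by
  ext
  simpa using norm_fourier m x

lemma fourierCoeff_fourier (j n : ℤ) :
    fourierCoeff ((fourier j : C(Circ, ℂ)) : Circ → ℂ) n = if j = n then 1 else 0 := by
  classical
  rw [← fourierCoeff_toLp (T := 2 * π) (fourier j) n, ← fourierBasis_repr]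
  have h2 : ContinuousMap.toLp (E := ℂ) 2 haarAddCircle ℂ (fourier j)
      = (fourierBasis (T := 2 * π)) j := (congrFun coe_fourierBasis j).symm
  rw [h2, HilbertBasis.repr_self]
  by_cases hj : j = n
  · subst hj; simp [lp.single_apply_self]
  · rw [lp.single_apply_ne _ _ _ (Ne.symm hj)]; simp [hj]

end HFE
namespace HFE

def csum (c : ℤ → ℂ) : C(Circ, ℂ) := ∑' k : ℤ, c k • (fourier k : C(Circ, ℂ))

lemma summable_csum {c : ℤ → ℂ} (hc : Summable c) :
    Summable fun k : ℤ => c k • (fourier k : C(Circ, ℂ)) := by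
  apply Summable.of_norm
  have he : ∀ k : ℤ, ‖c k • (fourier k : C(Circ, ℂ))‖ = ‖c k‖ := fun k => by
    rw [norm_smul, fourier_norm, mul_one]
  simpa [he] using hc.norm

lemma csum_apply {c : ℤ → ℂ} (hc : Summable c) (x : Circ) :
    csum c x = ∑' k : ℤ, c k * fourier k x := by
  have hs : HasSum (fun k : ℤ => c k • (fourier k : C(Circ, ℂ))) (csum c) :=
    (summable_csum hc).hasSum
  have h2 := (ContinuousMap.evalCLM ℂ x).hasSum hs
  have h3 : HasSum (fun k : ℤ => c k * fourier k x) (csum c x) := by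
    simpa [ContinuousMap.evalCLM, smul_eq_mul] using h2
  exact h3.tsum_eq.symm

open AddCircle in
lemma fourierCoeff_csum {c : ℤ → ℂ} (hc : Summable c) (n : ℤ) :
    fourierCoeff ((csum c : C(Circ, ℂ)) : Circ → ℂ) n = c n := by
  classical
  have h1 : (fun t : Circ => (fourier (-n) t : ℂ) • (csum c t : ℂ))
      = fun t => ∑' k : ℤ, (fourier (-n) t * (c k * fourier k t)) := by
    funext t
    rw [csum_apply hc t, smul_eq_mul, ← tsum_mul_left]
  have hmeas : ∀ k : ℤ, AEStronglyMeasurable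
      (fun t : Circ => (fourier (-n) t : ℂ) * (c k * fourier k t)) haarAddCircle := fun k =>
    ((map_continuous (fourier (-n))).mul (continuous_const.mul (map_continuous (fourier k)))).aestronglyMeasurable
  have hnn : ∀ k : ℤ, (∫⁻ t : Circ, ‖(fourier (-n) t : ℂ) * (c k * fourier k t)‖₊ ∂haarAddCircle)
      = (‖c k‖₊ : ENNReal) := by
    intro k
    have he : ∀ t : Circ, (‖(fourier (-n) t : ℂ) * (c k * fourier k t)‖₊ : ENNReal)
        = (‖c k‖₊ : ENNReal) := by
      intro t
      rw [nnnorm_mul, nnnorm_mul, nnnorm_fourier, nnnorm_fourier]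
      simp
    rw [lintegral_congr he]
    simp
  have hfin : (∑' k : ℤ, ∫⁻ t : Circ, ‖(fourier (-n) t : ℂ) * (c k * fourier k t)‖₊ ∂haarAddCircle) ≠ ⊤ := by
    rw [tsum_congr hnn]
    exact ENNReal.tsum_coe_ne_top_iff_summable.mpr (NNReal.summable_coe.mp (by simpa using hc.norm))
  have key : fourierCoeff ((csum c : C(Circ, ℂ)) : Circ → ℂ) n
      = ∑' k : ℤ, ∫ t : Circ, (fourier (-n) t : ℂ) * (c k * fourier k t) ∂haarAddCircle := by
    show (∫ t : Circ, (fourier (-n) t : ℂ) • (csum c t) ∂haarAddCircle) = _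
    rw [h1, integral_tsum hmeas hfin]
  rw [key]
  have h4 : ∀ k : ℤ, (∫ t : Circ, (fourier (-n) t : ℂ) * (c k * fourier k t) ∂haarAddCircle)
      = c k * fourierCoeff ((fourier k : C(Circ, ℂ)) : Circ → ℂ) n := by
    intro k
    rw [show (fun t : Circ => (fourier (-n) t : ℂ) * (c k * fourier k t))
        = fun t => c k * ((fourier (-n) t : ℂ) * fourier k t) from funext fun t => by ring]
    rw [MeasureTheory.integral_const_mul]
    congr 1
  rw [tsum_congr h4]
  have h5 : ∀ k : ℤ, c k * fourierCoeff ((fourier k : C(Circ, ℂ)) : Circ → ℂ) n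
      = if k = n then c k else 0 := by
    intro k
    rw [fourierCoeff_fourier]
    split_ifs <;> ring
  rw [tsum_congr h5]
  rw [tsum_eq_single n fun k hk => if_neg hk]
  exact if_pos rfl

end HFE
namespace HFE
open AddCircle

lemma mult_eq {m : ℤ → ℂ} {u : Circ → ℂ} (hc : Summable fun k => m k * fourierCoeff u k) :
    Mult m u = ⇑(csum fun k => m k * fourierCoeff u k) := by
  funext x
  rw [csum_apply hc x]
  rfl

lemma memLp_of_bdd {f : Circ → ℂ} (hm : AEStronglyMeasurable f haarAddCircle) (C : ℝ)
    (hC : ∀ x, ‖f x‖ ≤ C) : MemLp f 2 haarAddCircle :=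
  MemLp.of_bound hm C (Filter.Eventually.of_forall hC)

lemma bound_of_continuous {f : Circ → ℂ} (hf : Continuous f) : ∃ C, 0 ≤ C ∧ ∀ x, ‖f x‖ ≤ C := by
  obtain ⟨C, hC⟩ := isCompact_univ.exists_bound_of_continuousOn hf.continuousOn
  exact ⟨C, le_trans (norm_nonneg _) (hC 0 (Set.mem_univ 0)), fun x => hC x (Set.mem_univ x)⟩

lemma memLp_continuous {f : Circ → ℂ} (hf : Continuous f) : MemLp f 2 haarAddCircle := by
  obtain ⟨C, _, hC⟩ := bound_of_continuous hf
  exact memLp_of_bdd hf.aestronglyMeasurable C hC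

lemma integrable_fourier_mul {f : Circ → ℂ} (hf : MemLp f 2 haarAddCircle) (n : ℤ) :
    Integrable (fun t => (fourier n t : ℂ) * f t) haarAddCircle :=
  (hf.integrable one_le_two).bdd_mul (map_continuous (fourier n)).aestronglyMeasurable
    (c := 1) (Filter.Eventually.of_forall fun t => le_of_eq (norm_fourier n t))

lemma fourierCoeff_sub {f g : Circ → ℂ} (hf : MemLp f 2 haarAddCircle)
    (hg : MemLp g 2 haarAddCircle) (n : ℤ) :
    fourierCoeff (fun x => f x - g x) n = fourierCoeff f n - fourierCoeff g n := by
  show (∫ t : Circ, (fourier (-n) t : ℂ) • (f t - g t) ∂haarAddCircle) = _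
  have he : (fun t : Circ => (fourier (-n) t : ℂ) • (f t - g t))
      = fun t => (fourier (-n) t : ℂ) * f t - (fourier (-n) t : ℂ) * g t := by
    funext t; simp [smul_eq_mul, mul_sub]
  rw [he, integral_sub (integrable_fourier_mul hf _) (integrable_fourier_mul hg _)]
  rfl

lemma fourierCoeff_add {f g : Circ → ℂ} (hf : MemLp f 2 haarAddCircle)
    (hg : MemLp g 2 haarAddCircle) (n : ℤ) :
    fourierCoeff (fun x => f x + g x) n = fourierCoeff f n + fourierCoeff g n := by
  show (∫ t : Circ, (fourier (-n) t : ℂ) • (f t + g t) ∂haarAddCircle) = _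
  have he : (fun t : Circ => (fourier (-n) t : ℂ) • (f t + g t))
      = fun t => (fourier (-n) t : ℂ) * f t + (fourier (-n) t : ℂ) * g t := by
    funext t; simp [smul_eq_mul, mul_add]
  rw [he, integral_add (integrable_fourier_mul hf _) (integrable_fourier_mul hg _)]
  rfl

lemma parseval {f : Circ → ℂ} (hf : MemLp f 2 haarAddCircle) :
    Summable (fun i : ℤ => ‖fourierCoeff f i‖ ^ 2) ∧
      ∑' i : ℤ, ‖fourierCoeff f i‖ ^ 2 = ∫ t : Circ, ‖f t‖ ^ 2 ∂haarAddCircle := by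
  set F := hf.toLp f with hF
  have hcoeff : ∀ i : ℤ, fourierCoeff (F : Circ → ℂ) i = fourierCoeff f i := by
    intro i
    show (∫ t : Circ, (fourier (-i) t : ℂ) • (F : Circ → ℂ) t ∂haarAddCircle)
        = ∫ t : Circ, (fourier (-i) t : ℂ) • f t ∂haarAddCircle
    refine integral_congr_ae ?_
    filter_upwards [hf.coeFn_toLp] with t ht
    rw [ht]
  constructor
  · have hmem : Memℓp (fun i : ℤ => fourierBasis.repr F i) 2 := (fourierBasis.repr F).property
    have hs := (memℓp_gen_iff (p := 2) (by norm_num)).mp hmem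
    refine (summable_congr fun i => ?_).mp hs
    rw [fourierBasis_repr, hcoeff i]
    norm_num
  · have h2 := tsum_sq_fourierCoeff F
    rw [tsum_congr fun i => by rw [hcoeff i]] at h2
    rw [h2]
    refine integral_congr_ae ?_
    filter_upwards [hf.coeFn_toLp] with t ht
    rw [ht]

end HFE
namespace HFE
open AddCircle

lemma norm_fourierCoeffOn_le {G : ℝ → ℂ} {B : ℝ}
    (hB : ∀ x ∈ Set.Icc (0:ℝ) (0 + 2*π), ‖G x‖ ≤ B) (n : ℤ) :
    ‖fourierCoeffOn hb02 G n‖ ≤ B := by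
  rw [fourierCoeffOn_eq_integral, norm_smul]
  have h1 : ‖∫ x in (0:ℝ)..(0+2*π), (fourier (-n) (x : AddCircle (0+2*π-0)) : ℂ) • G x‖
      ≤ B * |(0+2*π) - 0| := by
    apply intervalIntegral.norm_integral_le_of_norm_le_const
    intro x hx
    rw [norm_smul, norm_fourier, one_mul]
    apply hB
    rw [Set.uIoc_of_le (by positivity : (0:ℝ) ≤ 0+2*π)] at hx
    exact ⟨le_of_lt hx.1, hx.2⟩
  have h2 : ‖(1 / (0 + 2*π - 0) : ℝ)‖ = 1 / (2*π) := by
    have hq : (0:ℝ) < 1 / (0 + 2*π - 0) := by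
      rw [show (0:ℝ) + 2*π - 0 = 2*π from by ring]; positivity
    rw [Real.norm_eq_abs, abs_of_pos hq]
    norm_num
  rw [h2]
  calc 1 / (2*π) * ‖∫ x in (0:ℝ)..(0+2*π), (fourier (-n) (x : AddCircle (0+2*π-0)) : ℂ) • G x‖
      ≤ 1 / (2*π) * (B * |(0+2*π) - 0|) := by
        apply mul_le_mul_of_nonneg_left h1 (by positivity)
    _ = B := by
        rw [show |(0+2*π) - 0| = 2*π from by
          rw [abs_of_pos (show (0:ℝ) < 0+2*π-0 from by have := Real.pi_pos; linarith)]; ring]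
        field_simp

lemma periodic_deriv' {f : ℝ → ℂ} (hf : Function.Periodic f (2*π)) :
    Function.Periodic (deriv f) (2*π) := by
  intro x
  have h1 : (fun y : ℝ => f (y + 2*π)) = f := funext hf
  calc deriv f (x + 2*π) = deriv (fun y : ℝ => f (y + 2*π)) x := (deriv_comp_add_const f (2*π) x).symm
    _ = deriv f x := by rw [h1]

lemma coeffOn_step {F : ℝ → ℂ} (hF : ContDiff ℝ ((⊤:ℕ∞) : WithTop ℕ∞) F)
    (hP : Function.Periodic F (2*π)) {n : ℤ} (hn : n ≠ 0) :
    ‖fourierCoeffOn hb02 F n‖ = ‖fourierCoeffOn hb02 (deriv F) n‖ / |(n:ℝ)| := by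
  have hone : (1 : WithTop ℕ∞) ≤ ((⊤:ℕ∞) : WithTop ℕ∞) := by exact_mod_cast le_top
  have hder : ∀ x ∈ Set.uIcc (0:ℝ) (0+2*π), HasDerivAt F (deriv F x) x := fun x _ =>
    (hF.differentiable (lt_of_lt_of_le zero_lt_one hone).ne' x).hasDerivAt
  have heq := fourierCoeffOn_of_hasDerivAt hb02 hn hder
    ((hF.continuous_deriv hone).intervalIntegrable 0 (0+2*π))
  have hF0 : F (0 + 2*π) = F 0 := hP 0
  have heq2 : fourierCoeffOn hb02 F n = (Complex.I * n)⁻¹ * fourierCoeffOn hb02 (deriv F) n := by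
    rw [heq, hF0, sub_self, mul_zero, zero_sub]
    have hπ : (π:ℂ) ≠ 0 := Complex.ofReal_ne_zero.mpr Real.pi_ne_zero
    have hn' : (n:ℂ) ≠ 0 := Int.cast_ne_zero.mpr hn
    have hI := Complex.I_ne_zero
    push_cast
    field_simp
    ring
  rw [heq2, norm_mul, norm_inv, norm_mul, Complex.norm_I, one_mul]
  rw [show ‖(n:ℂ)‖ = |(n:ℝ)| from by rw [← Complex.ofReal_intCast, Complex.norm_real, Real.norm_eq_abs]]
  rw [div_eq_inv_mul]

lemma decay4 {F : ℝ → ℂ} (hF : ContDiff ℝ ((⊤:ℕ∞) : WithTop ℕ∞) F)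
    (hP : Function.Periodic F (2*π)) :
    ∃ B : ℝ, ∀ n : ℤ, n ≠ 0 → ‖fourierCoeffOn hb02 F n‖ ≤ B / (n:ℝ)^4 := by
  have hsm : ∀ j : ℕ, ContDiff ℝ ((⊤:ℕ∞) : WithTop ℕ∞) (deriv^[j] F)
      ∧ Function.Periodic (deriv^[j] F) (2*π) := by
    intro j
    induction j with
    | zero => exact ⟨hF, hP⟩
    | succ j ih =>
        rw [Function.iterate_succ_apply']
        exact ⟨(contDiff_infty_iff_deriv.mp ih.1).2, periodic_deriv' ih.2⟩
  obtain ⟨B, hBb⟩ := isCompact_Icc.exists_bound_of_continuousOn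
    ((hsm 4).1.continuous.continuousOn (s := Set.Icc (0:ℝ) (0+2*π)))
  refine ⟨B, fun n hn => ?_⟩
  have habs : (0:ℝ) < |(n:ℝ)| := abs_pos.mpr (Int.cast_ne_zero.mpr hn)
  have prod : ∀ j : ℕ, ‖fourierCoeffOn hb02 (deriv^[j] F) n‖
      = ‖fourierCoeffOn hb02 F n‖ * |(n:ℝ)|^j := by
    intro j
    induction j with
    | zero => simp
    | succ j ih =>
        have hstep := coeffOn_step (hsm j).1 (hsm j).2 hn
        have h3 : ‖fourierCoeffOn hb02 (deriv (deriv^[j] F)) n‖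
            = ‖fourierCoeffOn hb02 (deriv^[j] F) n‖ * |(n:ℝ)| := by
          rw [hstep]; field_simp
        rw [Function.iterate_succ_apply', h3, ih]; ring
  have h4 : ‖fourierCoeffOn hb02 (deriv^[4] F) n‖ ≤ B := norm_fourierCoeffOn_le hBb n
  rw [prod 4] at h4
  have habs4 : |(n:ℝ)|^4 = (n:ℝ)^4 := by
    rw [← _root_.abs_pow]
    exact abs_of_nonneg (by positivity)
  rw [habs4] at h4
  exact (le_div_iff₀ (by positivity)).mpr h4

lemma fourierCoeff_eq_coeffOn (u : Circ → ℂ) (n : ℤ) :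
    fourierCoeff u n = fourierCoeffOn hb02 (fun x : ℝ => u x) n := by
  have hu : u = liftIoc (2*π) 0 (fun x : ℝ => u x) := by
    funext z
    have h1 : ((((equivIoc (2*π) 0 z) : ℝ)) : Circ) = z := (equivIoc (2*π) 0).symm_apply_apply z
    conv_rhs => rw [← h1]
    rw [liftIoc_coe_apply (equivIoc (2*π) 0 z).2]
    rw [h1]
  conv_lhs => rw [hu]
  exact fourierCoeff_liftIoc_eq (fun x : ℝ => u x) n

lemma fourierCoeff_decay {u : Circ → ℂ} (hu : SmoothT u) :
    ∃ B : ℝ, 0 ≤ B ∧ ∀ n : ℤ, n ≠ 0 → ‖fourierCoeff u n‖ ≤ B / (n:ℝ)^4 := by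
  have hF : ContDiff ℝ ((⊤:ℕ∞) : WithTop ℕ∞) fun x : ℝ => u x := hu.of_le (by simp)
  have hP : Function.Periodic (fun x : ℝ => u x) (2*π) := fun x =>
    congrArg u (coe_add_period (2*π) x)
  obtain ⟨B, hB⟩ := decay4 hF hP
  refine ⟨B, ?_, fun n hn => by rw [fourierCoeff_eq_coeffOn]; exact hB n hn⟩
  have h1 := hB 1 one_ne_zero
  have h2 := (norm_nonneg (fourierCoeffOn hb02 (fun x : ℝ => u x) 1)).trans h1
  simpa using h2

end HFE
namespace HFE

lemma summable_of_sq_decay {a : ℤ → ℂ} {B : ℝ} (hB : ∀ n : ℤ, n ≠ 0 → ‖a n‖ ≤ B / (n:ℝ)^2) :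
    Summable a := by
  have h2 : Summable fun n : ℤ => B * (1/(n:ℝ)^2) :=
    (summable_one_div_int_pow.mpr one_lt_two).mul_left B
  have h3 : Summable fun n : ℤ => (if n = 0 then ‖a 0‖ else 0) :=
    summable_of_ne_finset_zero (s := {0}) fun n hn => if_neg (by simpa using hn)
  apply Summable.of_norm
  apply Summable.of_nonneg_of_le (fun n => norm_nonneg _) ?_ (h2.add h3)
  intro n
  by_cases hn : n = 0
  · subst hn; simp
  · simp only [if_neg hn, add_zero]
    calc ‖a n‖ ≤ B / (n:ℝ)^2 := hB n hn
      _ = B * (1/(n:ℝ)^2) := by ring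

lemma memLp2 (f : ℤ → ℝ) (h : Summable fun k => f k ^ 2) : Memℓp f 2 := by
  apply memℓp_gen
  have he : (fun k : ℤ => ‖f k‖ ^ (2:ENNReal).toReal) = fun k => f k ^ 2 := by
    funext k
    rw [show ((2:ENNReal).toReal) = ((2:ℕ):ℝ) from by norm_num, Real.rpow_natCast,
      Real.norm_eq_abs, _root_.sq_abs]
  rw [he]; exact h

lemma lp_norm_eq (f : ℤ → ℝ) (h : Summable fun k => f k ^ 2) :
    ‖(⟨f, memLp2 f h⟩ : lp (fun _ : ℤ => ℝ) 2)‖ = (∑' k : ℤ, f k ^ 2) ^ ((1:ℝ)/2) := by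
  rw [lp.norm_eq_tsum_rpow (by norm_num) ⟨f, memLp2 f h⟩]
  have he : ∀ k : ℤ, ‖(⟨f, memLp2 f h⟩ : lp (fun _ : ℤ => ℝ) 2) k‖ ^ (2:ENNReal).toReal
      = f k ^ 2 := by
    intro k
    rw [show ((2:ENNReal).toReal) = ((2:ℕ):ℝ) from by norm_num, Real.rpow_natCast,
      Real.norm_eq_abs, _root_.sq_abs]
  rw [tsum_congr he]
  norm_num

lemma l2_triangle (a b c d : ℤ → ℝ)
    (ha0 : ∀ k, 0 ≤ a k)
    (hle : ∀ k, a k ≤ b k + c k + d k)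
    (hsa : Summable fun k => a k ^ 2) (hsb : Summable fun k => b k ^ 2)
    (hsc : Summable fun k => c k ^ 2) (hsd : Summable fun k => d k ^ 2) :
    (∑' k : ℤ, a k ^ 2) ^ ((1:ℝ)/2) ≤ (∑' k : ℤ, b k ^ 2) ^ ((1:ℝ)/2)
      + (∑' k : ℤ, c k ^ 2) ^ ((1:ℝ)/2) + (∑' k : ℤ, d k ^ 2) ^ ((1:ℝ)/2) := by
  set X : lp (fun _ : ℤ => ℝ) 2 := ⟨b, memLp2 b hsb⟩ with hX
  set Y : lp (fun _ : ℤ => ℝ) 2 := ⟨c, memLp2 c hsc⟩ with hY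
  set Z : lp (fun _ : ℤ => ℝ) 2 := ⟨d, memLp2 d hsd⟩ with hZ
  have hcoe : ⇑(X + Y + Z) = fun k => b k + c k + d k := rfl
  have hmem : Memℓp (fun k : ℤ => b k + c k + d k) 2 := hcoe ▸ (X + Y + Z).property
  have hsum : Summable fun k : ℤ => (b k + c k + d k) ^ 2 := by
    have hs2 := (memℓp_gen_iff (p := 2) (by norm_num)).mp hmem
    refine (summable_congr fun k => ?_).mp hs2
    rw [show ((2:ENNReal).toReal) = ((2:ℕ):ℝ) from by norm_num, Real.rpow_natCast,
      Real.norm_eq_abs, _root_.sq_abs]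
  have hXYZ : X + Y + Z = (⟨fun k => b k + c k + d k, memLp2 _ hsum⟩ : lp (fun _ : ℤ => ℝ) 2) :=
    Subtype.ext hcoe
  calc (∑' k : ℤ, a k ^ 2) ^ ((1:ℝ)/2)
      ≤ (∑' k : ℤ, (b k + c k + d k) ^ 2) ^ ((1:ℝ)/2) := by
        apply Real.rpow_le_rpow (tsum_nonneg fun k => sq_nonneg _)
          (Summable.tsum_le_tsum (fun k => pow_le_pow_left₀ (ha0 k) (hle k) 2) hsa hsum) (by norm_num)
    _ = ‖X + Y + Z‖ := by rw [hXYZ, lp_norm_eq _ hsum]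
    _ ≤ ‖X‖ + ‖Y‖ + ‖Z‖ := norm_add₃_le
    _ = (∑' k : ℤ, b k ^ 2) ^ ((1:ℝ)/2) + (∑' k : ℤ, c k ^ 2) ^ ((1:ℝ)/2)
        + (∑' k : ℤ, d k ^ 2) ^ ((1:ℝ)/2) := by
        rw [hX, hY, hZ, lp_norm_eq b hsb, lp_norm_eq c hsc, lp_norm_eq d hsd]

open AddCircle in
lemma L2norm_eq (f : Circ → ℂ) :
    L2norm f = (2*π) ^ ((1:ℝ)/2) * (∫ t : Circ, ‖f t‖ ^ 2 ∂haarAddCircle) ^ ((1:ℝ)/2) := by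
  rw [L2norm, L2sq]
  rw [show (volume : Measure Circ) = ENNReal.ofReal (2*π) • haarAddCircle from
    volume_eq_smul_haarAddCircle]
  rw [integral_smul_measure, ENNReal.toReal_ofReal two_pi_pos.le, smul_eq_mul]
  exact Real.mul_rpow two_pi_pos.le (integral_nonneg fun t => sq_nonneg _)

open AddCircle in
lemma integrable_normsq_of_bdd {f : Circ → ℂ} (hm : AEStronglyMeasurable f haarAddCircle)
    {C : ℝ} (hC : ∀ x, ‖f x‖ ≤ C) :
    Integrable (fun t : Circ => ‖f t‖ ^ 2) haarAddCircle := by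
  have hm2 : AEStronglyMeasurable (fun t : Circ => ‖f t‖ ^ 2) haarAddCircle := by
    have : (fun t : Circ => ‖f t‖ ^ 2) = fun t => ‖f t‖ * ‖f t‖ := funext fun t => sq (‖f t‖)
    rw [this]
    exact hm.norm.mul hm.norm
  refine MemLp.integrable le_rfl (MemLp.of_bound hm2 (C^2) (Filter.Eventually.of_forall fun x => ?_))
  rw [Real.norm_eq_abs, _root_.abs_of_nonneg (sq_nonneg _)]
  exact pow_le_pow_left₀ (norm_nonneg _) (hC x) 2

end HFE
open AddCircle in
/-- Lemma 3.2, second part (circle case): high-frequency elliptic estimate. -/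
theorem high_frequency_elliptic_estimate
    (α : ℝ) (hα : 0 < α) (hα2 : α < 2)
    (χ : Circ → ℝ) (hχ : ∀ x, 0 ≤ χ x) (hχm : Measurable χ)
    (hχb : ∃ M : ℝ, ∀ x, χ x ≤ M)
    (Gi : ℝ → ℝ) (hGi : ContDiff ℝ (⊤ : ℕ∞) Gi) (hGir : ∀ ξ, Gi ξ ∈ Set.Icc (0:ℝ) 1)
    (hGis : ∀ ξ : ℝ, |ξ| < 4 → Gi ξ = 0) :
    ∀ z : ℝ, ∀ h : ℝ, 0 < h → ∀ u : Circ → ℂ, SmoothT u →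
      L2norm (MultG Gi h u) ≤
        (z ^ 2 / (4:ℝ) ^ α) * L2norm u
        + L2norm (Pop α h z χ u)
        + (|z| * h ^ (α / 2) / (4:ℝ) ^ α) * (⨆ x : Circ, Real.sqrt (χ x)) *
            L2norm (fun x => (Real.sqrt (χ x) : ℂ) * u x) := by
  intro z h hh u hu
  classical
  obtain ⟨M, hM⟩ := hχb
  have hM0 : (0:ℝ) ≤ M := le_trans (hχ 0) (hM 0)
  have hFsm : ContDiff ℝ ((⊤:ℕ∞) : WithTop ℕ∞) fun x : ℝ => u x := hu.of_le (by simp)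
  have hucont : Continuous u :=
    (QuotientAddGroup.isQuotientMap_mk _).continuous_iff.mpr hFsm.continuous
  obtain ⟨B, hB0, hB⟩ := HFE.fourierCoeff_decay hu
  have h4α : (0:ℝ) < (4:ℝ) ^ α := Real.rpow_pos_of_pos (by norm_num) α
  have h4α1 : (1:ℝ) ≤ (4:ℝ) ^ α := by
    rw [show (1:ℝ) = (4:ℝ) ^ (0:ℝ) from (Real.rpow_zero 4).symm]
    exact Real.rpow_le_rpow_of_exponent_le (by norm_num) hα.le
  have hhα : (0:ℝ) ≤ h ^ (α/2) := Real.rpow_nonneg hh.le _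
  set A : ℝ := z^2 / (4:ℝ)^α with hAdef
  set Bc : ℝ := |z| * h ^ (α/2) / (4:ℝ)^α with hBcdef
  have hA0 : 0 ≤ A := div_nonneg (sq_nonneg z) h4α.le
  have hBc0 : 0 ≤ Bc := div_nonneg (mul_nonneg (abs_nonneg z) hhα) h4α.le
  have hksq : ∀ n : ℤ, n ≠ 0 → (1:ℝ) ≤ (n:ℝ)^2 := by
    intro n hn
    have h1 : (1:ℝ) ≤ |(n:ℝ)| := by exact_mod_cast Int.one_le_abs hn
    nlinarith [h1, abs_nonneg (n:ℝ), _root_.sq_abs (n:ℝ)]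
  have hGbd : ∀ ξ : ℝ, |Gi ξ| ≤ 1 := fun ξ =>
    abs_le.mpr ⟨by linarith [(hGir ξ).1], (hGir ξ).2⟩
  -- summability of the two symbols
  have hsumG : Summable fun k : ℤ => ((Gi (h * (k:ℝ)) : ℝ) : ℂ) * fourierCoeff u k := by
    apply HFE.summable_of_sq_decay (B := B)
    intro n hn
    rw [norm_mul, Complex.norm_real, Real.norm_eq_abs]
    have hn2 := hksq n hn
    have hn4 : (n:ℝ)^2 ≤ (n:ℝ)^4 := by nlinarith [hn2, sq_nonneg (n:ℝ)]
    have p2 : (0:ℝ) < (n:ℝ)^2 := lt_of_lt_of_le one_pos hn2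
    have p4 : (0:ℝ) < (n:ℝ)^4 := lt_of_lt_of_le p2 hn4
    calc |Gi (h*(n:ℝ))| * ‖fourierCoeff u n‖ ≤ 1 * (B / (n:ℝ)^4) :=
          mul_le_mul (hGbd _) (hB n hn) (norm_nonneg _) zero_le_one
      _ = B / (n:ℝ)^4 := one_mul _
      _ ≤ B / (n:ℝ)^2 := by
          rw [div_le_div_iff₀ p4 p2]
          exact mul_le_mul_of_nonneg_left hn4 hB0
  have hsumD : Summable fun k : ℤ => ((|h * (k:ℝ)| ^ α : ℝ) : ℂ) * fourierCoeff u k := by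
    apply HFE.summable_of_sq_decay (B := h ^ α * B)
    intro n hn
    rw [norm_mul, Complex.norm_real, Real.norm_eq_abs,
      _root_.abs_of_nonneg (Real.rpow_nonneg (abs_nonneg _) α)]
    have hn2 := hksq n hn
    have h1 : (1:ℝ) ≤ |(n:ℝ)| := by exact_mod_cast Int.one_le_abs hn
    have hsym : |h * (n:ℝ)| ^ α ≤ h ^ α * (n:ℝ)^2 := by
      rw [abs_mul, abs_of_pos hh, Real.mul_rpow hh.le (abs_nonneg _)]
      apply mul_le_mul_of_nonneg_left ?_ (Real.rpow_nonneg hh.le α)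
      calc |(n:ℝ)| ^ α ≤ |(n:ℝ)| ^ (2:ℝ) :=
            Real.rpow_le_rpow_of_exponent_le h1 hα2.le
        _ = (n:ℝ)^2 := by
            rw [show ((2:ℝ)) = ((2:ℕ):ℝ) from by norm_num, Real.rpow_natCast, _root_.sq_abs]
    have hn4 : (n:ℝ)^2 ≤ (n:ℝ)^4 := by nlinarith [hn2, sq_nonneg (n:ℝ)]
    have p2 : (0:ℝ) < (n:ℝ)^2 := lt_of_lt_of_le one_pos hn2
    have p4 : (0:ℝ) < (n:ℝ)^4 := lt_of_lt_of_le p2 hn4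
    calc |h * (n:ℝ)| ^ α * ‖fourierCoeff u n‖ ≤ (h ^ α * (n:ℝ)^2) * (B / (n:ℝ)^4) := by
          apply mul_le_mul hsym (hB n hn) (norm_nonneg _)
          positivity
      _ = (h ^ α * B) / (n:ℝ)^2 := by field_simp
  -- presentations as continuous sums
  have hMultG : MultG Gi h u = ⇑(HFE.csum fun k => ((Gi (h * (k:ℝ)) : ℝ) : ℂ) * fourierCoeff u k) :=
    HFE.mult_eq hsumG
  have hfrac : fracDh α h u = ⇑(HFE.csum fun k => ((|h * (k:ℝ)| ^ α : ℝ) : ℂ) * fourierCoeff u k) :=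
    HFE.mult_eq hsumD
  have hmemv1 : MemLp (MultG Gi h u) 2 haarAddCircle := by
    rw [hMultG]; exact HFE.memLp_continuous (map_continuous _)
  have hmemu : MemLp u 2 haarAddCircle := HFE.memLp_continuous hucont
  obtain ⟨Cu, hCu0, hCu⟩ := HFE.bound_of_continuous hucont
  -- the functions `χ·u` and `√χ·u`
  set w : Circ → ℂ := fun x => ((χ x : ℝ) : ℂ) * u x with hwdef
  set v : Circ → ℂ := fun x => ((Real.sqrt (χ x) : ℝ) : ℂ) * u x with hvdef
  have hwmeas : AEStronglyMeasurable w haarAddCircle :=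
    ((Complex.measurable_ofReal.comp hχm).aestronglyMeasurable.mul hucont.aestronglyMeasurable)
  have hnormw : ∀ x, ‖w x‖ = χ x * ‖u x‖ := fun x => by
    show ‖((χ x : ℝ) : ℂ) * u x‖ = _
    rw [norm_mul, Complex.norm_real, Real.norm_eq_abs, _root_.abs_of_nonneg (hχ x)]
  have hwbd : ∀ x, ‖w x‖ ≤ M * Cu := fun x => by
    rw [hnormw x]; exact mul_le_mul (hM x) (hCu x) (norm_nonneg _) hM0
  have hmemw : MemLp w 2 haarAddCircle := HFE.memLp_of_bdd hwmeas (M * Cu) hwbd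
  have hvmeas : AEStronglyMeasurable v haarAddCircle :=
    ((Complex.measurable_ofReal.comp (Real.continuous_sqrt.measurable.comp hχm)).aestronglyMeasurable.mul
      hucont.aestronglyMeasurable)
  have hnormv : ∀ x, ‖v x‖ = Real.sqrt (χ x) * ‖u x‖ := fun x => by
    show ‖((Real.sqrt (χ x) : ℝ) : ℂ) * u x‖ = _
    rw [norm_mul, Complex.norm_real, Real.norm_eq_abs, _root_.abs_of_nonneg (Real.sqrt_nonneg _)]
  have hvbd : ∀ x, ‖v x‖ ≤ Real.sqrt M * Cu := fun x => by
    rw [hnormv x]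
    exact mul_le_mul (Real.sqrt_le_sqrt (hM x)) (hCu x) (norm_nonneg _) (Real.sqrt_nonneg _)
  -- sup of sqrt chi
  set S : ℝ := ⨆ x : Circ, Real.sqrt (χ x) with hSdef
  have hbdd : BddAbove (Set.range fun x : Circ => Real.sqrt (χ x)) := by
    refine ⟨Real.sqrt M, ?_⟩
    rintro _ ⟨x, rfl⟩
    exact Real.sqrt_le_sqrt (hM x)
  have hSx : ∀ x : Circ, Real.sqrt (χ x) ≤ S := fun x => le_ciSup hbdd x
  have hS0 : (0:ℝ) ≤ S := le_trans (Real.sqrt_nonneg _) (hSx 0)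
  -- Pop decomposition
  set K : ℂ := Complex.I * (z:ℂ) * ((h ^ (α/2) : ℝ) : ℂ) with hKdef
  have hnormK : ‖K‖ = |z| * h ^ (α/2) := by
    rw [hKdef, norm_mul, norm_mul, Complex.norm_I, one_mul, Complex.norm_real,
      Complex.norm_real, Real.norm_eq_abs, Real.norm_eq_abs, _root_.abs_of_nonneg hhα]
  set g2 : Circ → ℂ := fun x => K * w x + ((z^2 : ℝ) : ℂ) * u x with hg2def
  have hPop : Pop α h z χ u = fun x => fracDh α h u x - g2 x := by
    funext x
    simp only [Pop, hg2def, hwdef, hKdef]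
    ring
  have hmemKw : MemLp (fun x => K * w x) 2 haarAddCircle := hmemw.const_mul K
  have hmemzu : MemLp (fun x => ((z^2:ℝ):ℂ) * u x) 2 haarAddCircle := hmemu.const_mul _
  have hmemg2 : MemLp g2 2 haarAddCircle := hmemKw.add hmemzu
  have hmemfrac : MemLp (fracDh α h u) 2 haarAddCircle := by
    rw [hfrac]; exact HFE.memLp_continuous (map_continuous _)
  have hmemPop : MemLp (Pop α h z χ u) 2 haarAddCircle := by
    rw [hPop]; exact hmemfrac.sub hmemg2
  -- Fourier coefficients
  have hcoefffrac : ∀ n : ℤ, fourierCoeff (fracDh α h u) n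
      = ((|h*(n:ℝ)|^α : ℝ):ℂ) * fourierCoeff u n := fun n => by
    rw [hfrac]; exact HFE.fourierCoeff_csum hsumD n
  have hcoeffv1 : ∀ n : ℤ, fourierCoeff (MultG Gi h u) n
      = ((Gi (h*(n:ℝ)) : ℝ):ℂ) * fourierCoeff u n := fun n => by
    rw [hMultG]; exact HFE.fourierCoeff_csum hsumG n
  have hcoeffPop : ∀ n : ℤ, fourierCoeff (Pop α h z χ u) n
      = ((|h*(n:ℝ)|^α : ℝ):ℂ) * fourierCoeff u n
        - (K * fourierCoeff w n + ((z^2:ℝ):ℂ) * fourierCoeff u n) := by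
    intro n
    rw [hPop, HFE.fourierCoeff_sub hmemfrac hmemg2 n, hcoefffrac n]
    congr 1
    rw [hg2def, HFE.fourierCoeff_add hmemKw hmemzu n, fourierCoeff.const_mul,
      fourierCoeff.const_mul]
  -- the pointwise coefficient estimate
  have hcoeffineq : ∀ n : ℤ, ‖fourierCoeff (MultG Gi h u) n‖
      ≤ A * ‖fourierCoeff u n‖ + ‖fourierCoeff (Pop α h z χ u) n‖
        + Bc * ‖fourierCoeff w n‖ := by
    intro n
    rw [hcoeffv1 n, norm_mul, Complex.norm_real, Real.norm_eq_abs]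
    by_cases hcase : |h * (n:ℝ)| < 4
    · rw [hGis _ hcase, abs_zero, zero_mul]
      positivity
    · push_neg at hcase
      have h4 : (4:ℝ)^α ≤ |h*(n:ℝ)|^α := Real.rpow_le_rpow (by norm_num) hcase hα.le
      have hid : ((|h*(n:ℝ)|^α : ℝ):ℂ) * fourierCoeff u n
          = fourierCoeff (Pop α h z χ u) n
            + (K * fourierCoeff w n + ((z^2:ℝ):ℂ) * fourierCoeff u n) := by
        rw [hcoeffPop n]; ring
      have hnorm1 : |h*(n:ℝ)|^α * ‖fourierCoeff u n‖
          ≤ ‖fourierCoeff (Pop α h z χ u) n‖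
            + (|z| * h^(α/2) * ‖fourierCoeff w n‖ + z^2 * ‖fourierCoeff u n‖) := by
        have h5 := congrArg norm hid
        rw [norm_mul, Complex.norm_real, Real.norm_eq_abs,
          _root_.abs_of_nonneg (Real.rpow_nonneg (abs_nonneg _) α)] at h5
        rw [h5]
        refine le_trans (norm_add_le _ _) (add_le_add_right (le_trans (norm_add_le _ _) ?_) _)
        apply add_le_add
        · rw [norm_mul, hnormK]
        · rw [norm_mul, show ‖((z^2:ℝ):ℂ)‖ = z^2 from by
            rw [Complex.norm_real, Real.norm_eq_abs, _root_.abs_of_nonneg (sq_nonneg z)]]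
      set U := ‖fourierCoeff u n‖
      set P := ‖fourierCoeff (Pop α h z χ u) n‖
      set W := ‖fourierCoeff w n‖
      have hU0 : 0 ≤ U := norm_nonneg _
      have hP0 : 0 ≤ P := norm_nonneg _
      have hW0 : 0 ≤ W := norm_nonneg _
      have hQU : (4:ℝ)^α * U ≤ |h*(n:ℝ)|^α * U := mul_le_mul_of_nonneg_right h4 hU0
      have hGiU : |Gi (h*(n:ℝ))| * U ≤ U := by
        calc |Gi (h*(n:ℝ))| * U ≤ 1 * U := mul_le_mul_of_nonneg_right (hGbd _) hU0
          _ = U := one_mul U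
      rw [hAdef, hBcdef, div_mul_eq_mul_div, div_mul_eq_mul_div]
      rw [show z^2 * U / (4:ℝ)^α + P + |z| * h^(α/2) * W / (4:ℝ)^α
          = (z^2*U + |z| * h^(α/2) * W + (4:ℝ)^α * P) / (4:ℝ)^α from by field_simp; ring]
      rw [le_div_iff₀ h4α]
      nlinarith [mul_le_mul_of_nonneg_right hGiU h4α.le, hQU, hnorm1,
        mul_le_mul_of_nonneg_right h4α1 hP0]
  -- Parseval
  obtain ⟨hsU, hpU⟩ := HFE.parseval hmemu
  obtain ⟨hsV, hpV⟩ := HFE.parseval hmemv1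
  obtain ⟨hsP, hpP⟩ := HFE.parseval hmemPop
  obtain ⟨hsW, hpW⟩ := HFE.parseval hmemw
  have hsb' : Summable fun k : ℤ => (A * ‖fourierCoeff u k‖)^2 :=
    (hsU.mul_left (A^2)).congr fun k => by ring
  have hsd' : Summable fun k : ℤ => (Bc * ‖fourierCoeff w k‖)^2 :=
    (hsW.mul_left (Bc^2)).congr fun k => by ring
  have hmink := HFE.l2_triangle (fun k => ‖fourierCoeff (MultG Gi h u) k‖)
    (fun k => A * ‖fourierCoeff u k‖) (fun k => ‖fourierCoeff (Pop α h z χ u) k‖)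
    (fun k => Bc * ‖fourierCoeff w k‖) (fun k => norm_nonneg _) hcoeffineq hsV hsb' hsP hsd'
  have htb : ∑' k : ℤ, (A * ‖fourierCoeff u k‖)^2
      = A^2 * ∑' k : ℤ, ‖fourierCoeff u k‖^2 := by
    rw [← tsum_mul_left]; exact tsum_congr fun k => by ring
  have htd : ∑' k : ℤ, (Bc * ‖fourierCoeff w k‖)^2
      = Bc^2 * ∑' k : ℤ, ‖fourierCoeff w k‖^2 := by
    rw [← tsum_mul_left]; exact tsum_congr fun k => by ring
  have hsqrt : ∀ a : ℝ, 0 ≤ a → ∀ t : ℝ, 0 ≤ t → (a^2 * t)^((1:ℝ)/2) = a * t^((1:ℝ)/2) := by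
    intro a ha t ht
    rw [Real.mul_rpow (sq_nonneg a) ht]
    congr 1
    rw [← Real.rpow_natCast a 2, ← Real.rpow_mul ha]
    norm_num
  -- comparison of w and v
  have hIw : ∫ t : Circ, ‖w t‖^2 ∂haarAddCircle ≤ S^2 * ∫ t : Circ, ‖v t‖^2 ∂haarAddCircle := by
    rw [← MeasureTheory.integral_const_mul]
    apply integral_mono (HFE.integrable_normsq_of_bdd hwmeas hwbd)
      (((HFE.integrable_normsq_of_bdd hvmeas hvbd).const_mul (S^2)))
    intro x
    have hwv : ‖w x‖ ≤ S * ‖v x‖ := by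
      rw [hnormw x, hnormv x, ← mul_assoc]
      apply mul_le_mul_of_nonneg_right ?_ (norm_nonneg _)
      calc χ x = Real.sqrt (χ x) * Real.sqrt (χ x) := (Real.mul_self_sqrt (hχ x)).symm
        _ ≤ S * Real.sqrt (χ x) :=
            mul_le_mul_of_nonneg_right (hSx x) (Real.sqrt_nonneg _)
    calc ‖w x‖^2 ≤ (S*‖v x‖)^2 := pow_le_pow_left₀ (norm_nonneg _) hwv 2
      _ = S^2*‖v x‖^2 := by ring
  have hJu0 : (0:ℝ) ≤ ∫ t : Circ, ‖u t‖^2 ∂haarAddCircle := integral_nonneg fun t => sq_nonneg _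
  have hJv0 : (0:ℝ) ≤ ∫ t : Circ, ‖v t‖^2 ∂haarAddCircle := integral_nonneg fun t => sq_nonneg _
  have hJw0 : (0:ℝ) ≤ ∫ t : Circ, ‖w t‖^2 ∂haarAddCircle := integral_nonneg fun t => sq_nonneg _
  -- core estimate
  have hW12 : (∑' k : ℤ, ‖fourierCoeff w k‖^2)^((1:ℝ)/2)
      ≤ S * (∫ t : Circ, ‖v t‖^2 ∂haarAddCircle)^((1:ℝ)/2) := by
    rw [hpW, ← hsqrt S hS0 _ hJv0]
    exact Real.rpow_le_rpow hJw0 hIw (by norm_num)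
  have hcore : (∫ t : Circ, ‖MultG Gi h u t‖^2 ∂haarAddCircle)^((1:ℝ)/2)
      ≤ A * (∫ t : Circ, ‖u t‖^2 ∂haarAddCircle)^((1:ℝ)/2)
        + (∫ t : Circ, ‖Pop α h z χ u t‖^2 ∂haarAddCircle)^((1:ℝ)/2)
        + Bc * S * (∫ t : Circ, ‖v t‖^2 ∂haarAddCircle)^((1:ℝ)/2) := by
    rw [← hpV, ← hpU, ← hpP]
    calc (∑' k : ℤ, ‖fourierCoeff (MultG Gi h u) k‖^2)^((1:ℝ)/2)
        ≤ (∑' k : ℤ, (A * ‖fourierCoeff u k‖)^2)^((1:ℝ)/2)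
          + (∑' k : ℤ, ‖fourierCoeff (Pop α h z χ u) k‖^2)^((1:ℝ)/2)
          + (∑' k : ℤ, (Bc * ‖fourierCoeff w k‖)^2)^((1:ℝ)/2) := hmink
      _ = A * (∑' k : ℤ, ‖fourierCoeff u k‖^2)^((1:ℝ)/2)
          + (∑' k : ℤ, ‖fourierCoeff (Pop α h z χ u) k‖^2)^((1:ℝ)/2)
          + Bc * (∑' k : ℤ, ‖fourierCoeff w k‖^2)^((1:ℝ)/2) := by
          rw [htb, htd, hsqrt A hA0 _ (tsum_nonneg fun k => sq_nonneg _),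
            hsqrt Bc hBc0 _ (tsum_nonneg fun k => sq_nonneg _)]
      _ ≤ A * (∑' k : ℤ, ‖fourierCoeff u k‖^2)^((1:ℝ)/2)
          + (∑' k : ℤ, ‖fourierCoeff (Pop α h z χ u) k‖^2)^((1:ℝ)/2)
          + Bc * (S * (∫ t : Circ, ‖v t‖^2 ∂haarAddCircle)^((1:ℝ)/2)) := by
          refine add_le_add_right (mul_le_mul_of_nonneg_left hW12 hBc0) _
      _ = A * (∑' k : ℤ, ‖fourierCoeff u k‖^2)^((1:ℝ)/2)
          + (∑' k : ℤ, ‖fourierCoeff (Pop α h z χ u) k‖^2)^((1:ℝ)/2)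
          + Bc * S * (∫ t : Circ, ‖v t‖^2 ∂haarAddCircle)^((1:ℝ)/2) := by ring
  -- conclude
  rw [HFE.L2norm_eq (MultG Gi h u), HFE.L2norm_eq u, HFE.L2norm_eq (Pop α h z χ u),
    HFE.L2norm_eq v]
  have hc2 : (0:ℝ) ≤ (2*π)^((1:ℝ)/2) := Real.rpow_nonneg HFE.two_pi_pos.le _
  have h6 := mul_le_mul_of_nonneg_left hcore hc2
  calc (2*π)^((1:ℝ)/2) * (∫ t : Circ, ‖MultG Gi h u t‖^2 ∂haarAddCircle)^((1:ℝ)/2)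
      ≤ (2*π)^((1:ℝ)/2) * (A * (∫ t : Circ, ‖u t‖^2 ∂haarAddCircle)^((1:ℝ)/2)
        + (∫ t : Circ, ‖Pop α h z χ u t‖^2 ∂haarAddCircle)^((1:ℝ)/2)
        + Bc * S * (∫ t : Circ, ‖v t‖^2 ∂haarAddCircle)^((1:ℝ)/2)) := h6
    _ = A * ((2*π)^((1:ℝ)/2) * (∫ t : Circ, ‖u t‖^2 ∂haarAddCircle)^((1:ℝ)/2))
        + (2*π)^((1:ℝ)/2) * (∫ t : Circ, ‖Pop α h z χ u t‖^2 ∂haarAddCircle)^((1:ℝ)/2)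
        + Bc * S * ((2*π)^((1:ℝ)/2) * (∫ t : Circ, ‖v t‖^2 ∂haarAddCircle)^((1:ℝ)/2)) := by
        ring
end
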